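/- There exists a constant c₁(d) > 0 depending only on d with the following property: for every full-rank lattice L ⊆ ℝ^d and every integer 1 ≤ m ≤ d there exists a linear subspace W ⊆ ℝ^d with dim W = m − 1 such that for all x, x′ ∈ L, either x − x′ ∈ W or the Euclidean distance from x − x′ to W is at least c₁(d) · λ_m(L). (Equivalently: L is contained in a disjoint union of translates of W, and any two distinct such translates are at Euclidean distance at least c₁(d) λ_m(L) from each other.) -/

import Mathlib

/-- The Euclidean (`L²`) norm of a vector. -/
noncomputable def euclNorm {ι : Type*} [Fintype ι] (x : ι → ℝ) : ℝ :=
  Real.sqrt (∑ i, x i ^ 2)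

/-- The `i`-th successive minimum of a lattice `L ⊆ ℝ^ι`: the least `r > 0` such that `L`
contains `i` linearly independent vectors of Euclidean norm at most `r`. -/
noncomputable def succMin {ι : Type*} [Fintype ι] (L : Submodule ℤ (ι → ℝ)) (i : ℕ) : ℝ :=
  sInf {r : ℝ | 0 < r ∧ ∃ v : Fin i → (ι → ℝ), (∀ j, v j ∈ L) ∧
    LinearIndependent ℝ v ∧ ∀ j, euclNorm (v j) ≤ r}

/-!
Let `μ = λ_m(L)`. The lattice vectors shorter than `μ` span a space of dimension `< m`, while,
since successive minima of a discrete lattice are attained, those of length at most `μ` span one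
of dimension `≥ m`. Hence some `(m - 1)`-dimensional `W` is spanned by lattice vectors
`u₁, …, uₙ` of length `≤ μ` and contains every lattice vector shorter than `μ`. If a lattice
vector `z ∉ W` were closer than `μ / (2 (2n + 1)ⁿ)` to some `w = ∑ aᵢ uᵢ ∈ W`, simultaneous
Dirichlet approximation would give `N ≤ (2n + 1)ⁿ` and integers `kᵢ` with `|N aᵢ - kᵢ| < 1 / (2n + 1)`, and
`N z - ∑ kᵢ uᵢ` would be a lattice vector outside `W` shorter than `μ`.
-/

open Module Submodule Set

theorem LinearIndepOn.finrank_span_eq_ncard {K V : Type*} [DivisionRing K] [AddCommGroup V]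
    [Module K V] {s : Set V} (hs : LinearIndepOn K id s) : finrank K (span K s) = s.ncard := by
  rw [finrank, rank_span_set hs]
  rfl

theorem exists_linearIndependent_fin_of_finrank_span_le {K V : Type*} [DivisionRing K]
    [AddCommGroup V] [Module K V] [FiniteDimensional K V] {s t : Set V} (hst : s ⊆ t) {n : ℕ}
    (hs : finrank K (span K s) ≤ n) (ht : n ≤ finrank K (span K t)) :
    ∃ u : Fin n → V, LinearIndependent K u ∧ (∀ i, u i ∈ t) ∧ s ⊆ span K (range u) := by
  obtain ⟨b, hbs, hspan_b, hb⟩ := exists_linearIndependent K s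
  obtain ⟨c, hct, hbc, htc, hc⟩ := exists_linearIndepOn_id_extension hb (hbs.trans hst)
  have hspan_c : span K c = span K t := le_antisymm (span_mono hct) (span_le.2 htc)
  obtain ⟨D, hbD, hDc, hD⟩ := Set.exists_subsuperset_card_eq (n := n) hbc
    (by rwa [← LinearIndepOn.finrank_span_eq_ncard hb, hspan_b])
    (by rwa [← hc.finrank_span_eq_ncard, hspan_c])
  have hDli : LinearIndependent K ((↑) : D → V) := hc.mono hDc
  have := hDli.finite
  let e : Fin n ≃ D := (finCongr hD.symm).trans (Finite.equivFin D).symm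
  have hrange : range ((↑) ∘ e : Fin n → V) = D := by
    rw [EquivLike.range_comp, Subtype.range_coe]
  refine ⟨(↑) ∘ e, hDli.comp e e.injective, fun i => hDc.trans hct (e i).2, ?_⟩
  rw [hrange]
  exact fun x hx => span_mono hbD (hspan_b ▸ subset_span hx)

theorem exists_nat_abs_mul_sub_int_lt {ι : Type*} [Fintype ι] (a : ι → ℝ) {T : ℕ}
    (hT : 0 < T) :
    ∃ N : ℕ, 0 < N ∧ N ≤ T ^ Fintype.card ι ∧ ∃ k : ι → ℤ, ∀ i, |N * a i - k i| < 1 / T := by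
  classical
  let f : ℕ → ι → ℤ := fun n i => ⌊T * Int.fract (n * a i)⌋
  have hf : ∀ n ∈ Finset.range (T ^ Fintype.card ι + 1),
      f n ∈ Fintype.piFinset fun _ => Finset.Ico (0 : ℤ) T := by
    intro n _
    simp only [f, Fintype.mem_piFinset, Finset.mem_Ico, Int.floor_nonneg, Int.floor_lt,
      Int.cast_natCast]
    exact fun i => ⟨by positivity,
      mul_lt_of_lt_one_right (by exact_mod_cast hT) (Int.fract_lt_one _)⟩
  have hcard : (Fintype.piFinset fun _ : ι => Finset.Ico (0 : ℤ) T).card <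
      (Finset.range (T ^ Fintype.card ι + 1)).card := by
    simp
  obtain ⟨p, hp, q, hq, hpq, hfpq⟩ := Finset.exists_ne_map_eq_of_card_lt_of_maps_to hcard hf
  wlog hlt : p < q generalizing p q
  · exact this q hq p hp hpq.symm hfpq.symm (by omega)
  rw [Finset.mem_range] at hp hq
  refine ⟨q - p, by omega, by omega, fun i => ⌊q * a i⌋ - ⌊p * a i⌋, fun i => ?_⟩
  have hfract := Int.abs_sub_lt_one_of_floor_eq_floor (congrFun hfpq.symm i)
  rw [← mul_sub, abs_mul, Nat.abs_cast] at hfract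
  have hkey : ((q - p : ℕ) : ℝ) * a i - ((⌊q * a i⌋ - ⌊p * a i⌋ : ℤ) : ℝ) =
      Int.fract (q * a i) - Int.fract (p * a i) := by
    rw [Int.fract, Int.fract]
    push_cast [Nat.cast_sub hlt.le]
    ring
  rwa [hkey, lt_div_iff₀' (by exact_mod_cast hT)]

noncomputable def separationConst (n : ℕ) : ℝ :=
  (2 * (2 * n + 1) ^ n)⁻¹

theorem separationConst_pos (n : ℕ) : 0 < separationConst n := by
  unfold separationConst
  positivity

theorem separationConst_anti {n d : ℕ} (h : n ≤ d) : separationConst d ≤ separationConst n := by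
  unfold separationConst
  gcongr
  calc (2 * n + 1 : ℝ) ^ n ≤ (2 * d + 1) ^ n := by gcongr
    _ ≤ (2 * d + 1) ^ d := pow_le_pow_right₀ (by linarith) h

theorem Seminorm.map_add_sum_smul_le {E ι : Type*} [AddCommGroup E] [Module ℝ E] [Fintype ι]
    (p : Seminorm ℝ E) (v : E) (c : ι → ℝ) (u : ι → E) :
    p (v + ∑ i, c i • u i) ≤ p v + ∑ i, |c i| * p (u i) := by
  refine (map_add_le_add p _ _).trans (add_le_add_right ?_ _)
  refine (Finset.le_sum_of_subadditive p (map_zero p).le (map_add_le_add p) _ _).trans ?_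
  simp [map_smul_eq_mul]

theorem le_seminorm_sub_of_forall_lt_mem_span {E ι : Type*} [AddCommGroup E] [Module ℝ E]
    [Fintype ι] (p : Seminorm ℝ E) (L : Submodule ℤ E) {u : ι → E} {μ : ℝ}
    (hu : ∀ i, u i ∈ L) (huμ : ∀ i, p (u i) ≤ μ)
    (hshort : ∀ y ∈ L, p y < μ → y ∈ span ℝ (range u))
    {z w : E} (hz : z ∈ L) (hzu : z ∉ span ℝ (range u)) (hw : w ∈ span ℝ (range u)) :
    separationConst (Fintype.card ι) * μ ≤ p (z - w) := by
  set n := Fintype.card ι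
  by_contra! hlt
  have hμ : 0 < μ :=
    pos_of_mul_pos_right ((apply_nonneg p _).trans_lt hlt) (separationConst_pos n).le
  obtain ⟨a, rfl⟩ := (mem_span_range_iff_exists_fun ℝ).1 hw
  obtain ⟨N, hN, hNn, k, hk⟩ := exists_nat_abs_mul_sub_int_lt a (T := 2 * n + 1) (by omega)
  set y := (N : ℝ) • z - ∑ i, (k i : ℝ) • u i
  have hyL : y ∈ L := sub_mem (by rw [Nat.cast_smul_eq_nsmul]; exact nsmul_mem hz N)
    (sum_mem fun i _ => by rw [Int.cast_smul_eq_zsmul]; exact zsmul_mem (hu i) _)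
  have hy : y = (N : ℝ) • (z - ∑ i, a i • u i) + ∑ i, ((N : ℝ) * a i - k i) • u i := by
    simp only [y, smul_sub, Finset.smul_sum, sub_smul, mul_smul, Finset.sum_sub_distrib]
    abel
  have hfar : N * p (z - ∑ i, a i • u i) < μ / 2 := calc
    N * p (z - ∑ i, a i • u i) ≤ (2 * n + 1) ^ n * p (z - ∑ i, a i • u i) := by
      gcongr
      exact_mod_cast hNn
    _ < (2 * n + 1) ^ n * (separationConst n * μ) := by gcongr
    _ = μ / 2 := by
      unfold separationConst
      field_simp
  have hnear : ∑ i, |(N : ℝ) * a i - k i| * p (u i) ≤ μ / 2 := calc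
    _ ≤ ∑ _i : ι, 1 / (2 * n + 1 : ℝ) * μ := by
      gcongr with i
      · exact_mod_cast (hk i).le
      · exact huμ i
    _ = n / (2 * n + 1) * μ := by simp [n]; ring
    _ ≤ μ / 2 := by
      rw [div_mul_eq_mul_div, div_le_div_iff₀ (by positivity) two_pos]
      nlinarith
  have hpy : p y < μ := by
    have := hy ▸ p.map_add_sum_smul_le ((N : ℝ) • (z - ∑ i, a i • u i)) _ u
    rw [map_smul_eq_mul, Real.norm_natCast] at this
    linarith
  apply hzu
  have hNz : (N : ℝ) • z ∈ span ℝ (range u) := by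
    rw [← sub_add_cancel ((N : ℝ) • z) (∑ i, (k i : ℝ) • u i)]
    exact add_mem (hshort y hyL hpy)
      (sum_mem fun i _ => smul_mem _ _ (subset_span (mem_range_self i)))
  simpa [smul_smul, hN.ne'] using smul_mem _ (N : ℝ)⁻¹ hNz

section euclNorm

variable {ι : Type*} [Fintype ι]

theorem euclNorm_eq_norm_toLp (x : ι → ℝ) : euclNorm x = ‖WithLp.toLp 2 x‖ := by
  simp [euclNorm, EuclideanSpace.norm_eq]

noncomputable def euclSeminorm : Seminorm ℝ (ι → ℝ) :=
  (normSeminorm ℝ (EuclideanSpace ℝ ι)).comp (WithLp.linearEquiv 2 ℝ (ι → ℝ)).symm.toLinearMap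

@[simp]
theorem euclSeminorm_apply (x : ι → ℝ) : euclSeminorm x = euclNorm x :=
  (euclNorm_eq_norm_toLp x).symm

theorem euclNorm_nonneg (x : ι → ℝ) : 0 ≤ euclNorm x := Real.sqrt_nonneg _

theorem isBounded_setOf_euclNorm_le (R : ℝ) : Bornology.IsBounded {x : ι → ℝ | euclNorm x ≤ R} := by
  have : {x : ι → ℝ | euclNorm x ≤ R} = WithLp.toLp 2 ⁻¹' Metric.closedBall 0 R := by
    ext x
    simp [euclNorm_eq_norm_toLp]
  rw [this]
  exact (PiLp.antilipschitzWith_toLp 2 _).isBounded_preimage Metric.isBounded_closedBall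

theorem finite_setOf_mem_euclNorm_le (L : Submodule ℤ (ι → ℝ)) [DiscreteTopology L] (R : ℝ) :
    {x | x ∈ L ∧ euclNorm x ≤ R}.Finite := by
  have hL : IsClosed (L : Set (ι → ℝ)) := AddSubgroup.isClosed_of_discrete (H := L.toAddSubgroup)
  exact (Metric.finite_isBounded_inter_isClosed (s := (L : Set (ι → ℝ)))
    DiscreteTopology.isDiscrete (isBounded_setOf_euclNorm_le R) hL).subset fun x hx => ⟨hx.2, hx.1⟩

end euclNorm

theorem LinearIndependent.discreteTopology_span_int {E ι : Type*} [NormedAddCommGroup E]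
    [NormedSpace ℝ E] [FiniteDimensional ℝ E] [Fintype ι] {b : ι → E}
    (hb : LinearIndependent ℝ b) (hcard : Fintype.card ι = finrank ℝ E) :
    DiscreteTopology (span ℤ (range b)) := by
  rw [← coe_basisOfLinearIndependentOfCardEqFinrank' b hb hcard]
  infer_instance

section succMin

variable {ι : Type*} [Fintype ι] (L : Submodule ℤ (ι → ℝ))

theorem exists_pos_forall_euclNorm_lt_add_imp_le [DiscreteTopology L] (μ : ℝ) :
    ∃ ε > 0, ∀ x ∈ L, euclNorm x < μ + ε → euclNorm x ≤ μ := by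
  set G := euclNorm '' {x | x ∈ L ∧ euclNorm x ≤ μ + 1} \ {μ}
  have hG : IsOpen Gᶜ := (((finite_setOf_mem_euclNorm_le L _).image _).sdiff).isClosed.isOpen_compl
  obtain ⟨ε, hε, hball⟩ := Metric.isOpen_iff.1 hG μ (fun h => h.2 rfl)
  refine ⟨min ε 1, lt_min hε one_pos, fun x hx hlt => not_lt.1 fun hμx => ?_⟩
  refine hball ?_ ⟨⟨x, ⟨hx, hlt.le.trans (by gcongr; exact min_le_right _ _)⟩, rfl⟩, hμx.ne'⟩
  rw [Real.ball_eq_Ioo]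
  exact ⟨by linarith, hlt.trans_le (by gcongr; exact min_le_left _ _)⟩

variable {L}

theorem succMin_nonneg (m : ℕ) : 0 ≤ succMin L m :=
  Real.sInf_nonneg fun _ hr => hr.1.le

theorem succMin_le {m : ℕ} {v : Fin m → ι → ℝ} (hvL : ∀ j, v j ∈ L) (hv : LinearIndependent ℝ v)
    {r : ℝ} (hr : 0 < r) (hvr : ∀ j, euclNorm (v j) ≤ r) : succMin L m ≤ r :=
  csInf_le ⟨0, fun _ hr => hr.1.le⟩ ⟨hr, v, hvL, hv, hvr⟩

theorem exists_linearIndependent_euclNorm_le_succMin [DiscreteTopology L] {m : ℕ}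
    {v : Fin m → ι → ℝ} (hvL : ∀ j, v j ∈ L) (hv : LinearIndependent ℝ v) :
    ∃ v' : Fin m → ι → ℝ, (∀ j, v' j ∈ L) ∧ LinearIndependent ℝ v' ∧
      ∀ j, euclNorm (v' j) ≤ succMin L m := by
  obtain ⟨ε, hε, hgap⟩ := exists_pos_forall_euclNorm_lt_add_imp_le L (succMin L m)
  obtain ⟨R, hR⟩ := Finite.exists_le fun j => euclNorm (v j)
  obtain ⟨r, ⟨-, v', hv'L, hv', hv'r⟩, hr⟩ := exists_lt_of_csInf_lt
    (by exact ⟨max R 1, lt_max_of_lt_right one_pos, v, hvL, hv,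
      fun j => (hR j).trans (le_max_left _ _)⟩) (lt_add_of_pos_right (succMin L m) hε)
  exact ⟨v', hv'L, hv', fun j => hgap _ (hv'L j) ((hv'r j).trans_lt hr)⟩

theorem le_finrank_span_setOf_euclNorm_le_succMin [DiscreteTopology L] {m : ℕ}
    {v : Fin m → ι → ℝ} (hvL : ∀ j, v j ∈ L) (hv : LinearIndependent ℝ v) :
    m ≤ finrank ℝ (span ℝ {x | x ∈ L ∧ euclNorm x ≤ succMin L m}) := by
  obtain ⟨v', hv'L, hv', hv'μ⟩ := exists_linearIndependent_euclNorm_le_succMin hvL hv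
  calc m = finrank ℝ (span ℝ (range v')) := by rw [finrank_span_eq_card hv', Fintype.card_fin]
    _ ≤ _ := by
      refine Submodule.finrank_mono (span_mono (range_subset_iff.2 fun j => ?_))
      exact ⟨hv'L j, hv'μ j⟩

theorem finrank_span_setOf_euclNorm_lt_succMin_lt {m : ℕ} (hm : 0 < m) :
    finrank ℝ (span ℝ {x | x ∈ L ∧ euclNorm x < succMin L m}) < m := by
  by_contra! h
  obtain ⟨v, hv, hvS, -⟩ := exists_linearIndependent_fin_of_finrank_span_le (empty_subset _)
    (by rw [span_empty, finrank_bot]; exact m.zero_le) h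
  have : Nonempty (Fin m) := ⟨⟨0, hm⟩⟩
  obtain ⟨j₀, hj₀⟩ := Finite.exists_max fun j => euclNorm (v j)
  obtain ⟨r, hr, hrμ⟩ := exists_between (hvS j₀).2
  exact hrμ.not_ge (succMin_le (fun j => (hvS j).1) hv ((euclNorm_nonneg _).trans_lt hr)
    fun j => (hj₀ j).trans hr.le)

end succMin

/-- **Lemma 2.5.** There is a constant `c₁(d) > 0` depending only on `d` such that for every
full-rank lattice `L ⊆ ℝ^d` and every `1 ≤ m ≤ d` there is a linear subspace `W` of
dimension `m − 1` such that for all `x, x' ∈ L`, either `x − x' ∈ W` or the Euclidean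
distance from `x − x'` to `W` is at least `c₁(d) λ_m(L)`. -/
theorem lattice_subspace_separation (d : ℕ) :
    ∃ c₁ > (0 : ℝ), ∀ b : Fin d → (Fin d → ℝ), LinearIndependent ℝ b →
      ∀ L : Submodule ℤ (Fin d → ℝ), L = Submodule.span ℤ (Set.range b) →
      ∀ m : ℕ, 1 ≤ m → m ≤ d →
      ∃ W : Submodule ℝ (Fin d → ℝ), Module.finrank ℝ W = m - 1 ∧
        ∀ x ∈ L, ∀ x' ∈ L, x - x' ∈ W ∨
          ∀ w ∈ W, c₁ * succMin L m ≤ euclNorm (x - x' - w) := by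
  refine ⟨separationConst d, separationConst_pos d, ?_⟩
  rintro b hb L rfl m hm hmd
  have := hb.discreteTopology_span_int (by simp)
  obtain ⟨u, hu, huL, hu_span⟩ := exists_linearIndependent_fin_of_finrank_span_le (n := m - 1)
    (by exact fun x hx => ⟨hx.1, hx.2.le⟩)
    (Nat.le_sub_one_of_lt (finrank_span_setOf_euclNorm_lt_succMin_lt hm))
    ((m.sub_le 1).trans (le_finrank_span_setOf_euclNorm_le_succMin
      (fun j => subset_span (mem_range_self (Fin.castLE hmd j)))
      (hb.comp _ (Fin.castLE_injective hmd))))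
  refine ⟨span ℝ (range u), by rw [finrank_span_eq_card hu, Fintype.card_fin],
    fun x hx x' hx' => or_iff_not_imp_left.2 fun hxW w hw => ?_⟩
  calc _ ≤ separationConst (m - 1) * succMin (span ℤ (range b)) m :=
        mul_le_mul_of_nonneg_right (separationConst_anti (by omega)) (succMin_nonneg m)
    _ ≤ euclNorm (x - x' - w) := by
      simpa using le_seminorm_sub_of_forall_lt_mem_span euclSeminorm _
        (fun i => (huL i).1) (fun i => by simpa using (huL i).2)
        (fun y hy hyμ => hu_span ⟨hy, by simpa using hyμ⟩) (sub_mem hx hx') hxW hw
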